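/- arXiv:2201.06482 — 3 statements merged into one kernel-verified Lean document; each statement's English description precedes it below -/
import Mathlib

section
/- Let K(x) = e^{-|x|}/2. If U : ℝ → ℝ is bounded and continuous and V = K * U (convolution), then V is twice continuously differentiable and satisfies V - V'' = U on ℝ. -/
open MeasureTheory Real Set

/-- Integrability of a function bounded by `M * exp` on `Iic x`. -/
lemma aux_int_Iic (h : ℝ → ℝ) (hc : Continuous h) (M : ℝ)
    (hb : ∀ y, |h y| ≤ M * Real.exp y) (x : ℝ) :
    IntegrableOn h (Set.Iic x) := by
  refine Integrable.mono' ((integrableOn_exp_Iic x).const_mul M)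
    hc.aestronglyMeasurable.restrict ?_
  filter_upwards with y
  simpa [Real.norm_eq_abs] using hb y

/-- Integrability of a function bounded by `M * exp (-·)` on `Ioi x`. -/
lemma aux_int_Ioi (h : ℝ → ℝ) (hc : Continuous h) (M : ℝ)
    (hb : ∀ y, |h y| ≤ M * Real.exp (-y)) (x : ℝ) :
    IntegrableOn h (Set.Ioi x) := by
  refine Integrable.mono' ((exp_neg_integrableOn_Ioi x one_pos).const_mul M)
    hc.aestronglyMeasurable.restrict ?_
  filter_upwards with y
  simpa [Real.norm_eq_abs] using hb y

/-- FTC for integrals over `Iic`. -/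
lemma aux_hasDerivAt_Iic (h : ℝ → ℝ) (hc : Continuous h)
    (hi : ∀ x, IntegrableOn h (Set.Iic x)) (x : ℝ) :
    HasDerivAt (fun t => ∫ y in Set.Iic t, h y) (h x) x := by
  have key : (fun t => ∫ y in Set.Iic t, h y)
      = fun t => (∫ y in Set.Iic (0:ℝ), h y) + ∫ y in (0:ℝ)..t, h y := by
    funext t
    rw [← intervalIntegral.integral_Iic_sub_Iic (hi 0) (hi t)]
    ring
  rw [key]
  exact ((hasDerivAt_const x (∫ y in Set.Iic (0:ℝ), h y)).add
    (intervalIntegral.integral_hasDerivAt_right (hc.intervalIntegrable 0 x)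
      (hc.stronglyMeasurableAtFilter _ _) hc.continuousAt)).congr_deriv (zero_add _)

theorem conv_exponential_kernel_resolvent (K U V : ℝ → ℝ)
    (hK : ∀ x, K x = Real.exp (-|x|) / 2)
    (hU : Continuous U) (M : ℝ) (hUb : ∀ x, |U x| ≤ M)
    (hV : ∀ x, V x = ∫ y : ℝ, K (x - y) * U y) :
    ContDiff ℝ 2 V ∧ ∀ x, V x - deriv (deriv V) x = U x := by
  set A : ℝ → ℝ := fun x => ∫ y in Set.Iic x, Real.exp y * U y with hA
  set B : ℝ → ℝ := fun x => ∫ y in Set.Iic x, Real.exp y * U (-y) with hB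
  have hcA : Continuous fun y => Real.exp y * U y := Real.continuous_exp.mul hU
  have hcB : Continuous fun y => Real.exp y * U (-y) :=
    Real.continuous_exp.mul (hU.comp continuous_neg)
  have hbA : ∀ y, |Real.exp y * U y| ≤ M * Real.exp y := fun y => by
    rw [abs_mul, abs_of_pos (Real.exp_pos y)]
    calc Real.exp y * |U y| ≤ Real.exp y * M :=
          mul_le_mul_of_nonneg_left (hUb y) (Real.exp_pos y).le
      _ = M * Real.exp y := mul_comm _ _
  have hbB : ∀ y, |Real.exp y * U (-y)| ≤ M * Real.exp y := fun y => by
    rw [abs_mul, abs_of_pos (Real.exp_pos y)]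
    calc Real.exp y * |U (-y)| ≤ Real.exp y * M :=
          mul_le_mul_of_nonneg_left (hUb (-y)) (Real.exp_pos y).le
      _ = M * Real.exp y := mul_comm _ _
  have hiA : ∀ x, IntegrableOn (fun y => Real.exp y * U y) (Set.Iic x) :=
    aux_int_Iic _ hcA M hbA
  have hiB : ∀ x, IntegrableOn (fun y => Real.exp y * U (-y)) (Set.Iic x) :=
    aux_int_Iic _ hcB M hbB
  have hiC : ∀ x, IntegrableOn (fun y => Real.exp (-y) * U y) (Set.Ioi x) := by
    refine aux_int_Ioi _ (Real.continuous_exp.comp continuous_neg |>.mul hU) M (fun y => ?_)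
    rw [abs_mul, abs_of_pos (Real.exp_pos (-y))]
    calc Real.exp (-y) * |U y| ≤ Real.exp (-y) * M :=
          mul_le_mul_of_nonneg_left (hUb y) (Real.exp_pos (-y)).le
      _ = M * Real.exp (-y) := mul_comm _ _
  have hA' : ∀ x, HasDerivAt A (Real.exp x * U x) x := aux_hasDerivAt_Iic _ hcA hiA
  have hB' : ∀ x, HasDerivAt B (Real.exp x * U (-x)) x := aux_hasDerivAt_Iic _ hcB hiB
  -- B (-x) = ∫ y in Ioi x, exp (-y) * U y
  have hBneg : ∀ x, B (-x) = ∫ y in Set.Ioi x, Real.exp (-y) * U y := by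
    intro x
    have := integral_comp_neg_Iic (-x) (fun y => Real.exp (-y) * U y)
    simp only [neg_neg] at this
    exact this
  -- the explicit formula for V
  have hVform : ∀ x, V x = (Real.exp (-x) * A x + Real.exp x * B (-x)) / 2 := by
    intro x
    have hEqL : Set.EqOn (fun y => K (x - y) * U y)
        (fun y => (Real.exp (-x) / 2) * (Real.exp y * U y)) (Set.Iic x) := by
      intro y hy
      simp only [hK, abs_of_nonneg (sub_nonneg.2 (Set.mem_Iic.mp hy))]
      rw [neg_sub, sub_eq_add_neg, Real.exp_add]
      ring
    have hEqR : Set.EqOn (fun y => K (x - y) * U y)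
        (fun y => (Real.exp x / 2) * (Real.exp (-y) * U y)) (Set.Ioi x) := by
      intro y hy
      simp only [hK, abs_of_nonpos (sub_nonpos.2 (Set.mem_Ioi.mp hy).le)]
      rw [neg_neg, sub_eq_add_neg, Real.exp_add]
      ring
    have hl : IntegrableOn (fun y => K (x - y) * U y) (Set.Iic x) :=
      IntegrableOn.congr_fun ((hiA x).const_mul _) hEqL.symm measurableSet_Iic
    have hr : IntegrableOn (fun y => K (x - y) * U y) (Set.Ioi x) :=
      IntegrableOn.congr_fun ((hiC x).const_mul _) hEqR.symm measurableSet_Ioi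
    rw [hV x, ← intervalIntegral.integral_Iic_add_Ioi hl hr,
      setIntegral_congr_fun measurableSet_Iic hEqL,
      setIntegral_congr_fun measurableSet_Ioi hEqR,
      integral_const_mul, integral_const_mul, hBneg x]
    ring
  set F : ℝ → ℝ := fun x => (Real.exp (-x) * A x + Real.exp x * B (-x)) / 2 with hFdef
  have hVF : V = F := funext hVform
  have key : ∀ x : ℝ, Real.exp (-x) * Real.exp x = 1 := fun x => by
    rw [← Real.exp_add]; simp
  -- derivative building blocks
  have hexpneg : ∀ x : ℝ, HasDerivAt (fun x => Real.exp (-x)) (-Real.exp (-x)) x := by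
    intro x
    have := (Real.hasDerivAt_exp (-x)).comp x (hasDerivAt_neg x)
    simpa [Function.comp_def] using this
  have hBn' : ∀ x : ℝ, HasDerivAt (fun x => B (-x)) (-(Real.exp (-x) * U x)) x := by
    intro x
    have := (hB' (-x)).comp x (hasDerivAt_neg x)
    simpa [mul_comm, Function.comp_def] using this
  set G : ℝ → ℝ := fun x => (Real.exp x * B (-x) - Real.exp (-x) * A x) / 2 with hGdef
  have hF' : ∀ x, HasDerivAt F (G x) x := by
    intro x
    have p1 := (hexpneg x).mul (hA' x)
    have p2 := (Real.hasDerivAt_exp x).mul (hBn' x)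
    have := (p1.add p2).div_const 2
    exact this.congr_deriv (by
      simp only [hGdef]
      ring)
  have hG' : ∀ x, HasDerivAt G (V x - U x) x := by
    intro x
    have p1 := (hexpneg x).mul (hA' x)
    have p2 := (Real.hasDerivAt_exp x).mul (hBn' x)
    have := (p2.sub p1).div_const 2
    exact this.congr_deriv (by
      rw [hVF]
      simp only [hFdef]
      have k := key x
      linear_combination (-U x) * k)
  have hV' : ∀ x, HasDerivAt V (G x) x := by
    intro x; rw [hVF]; exact hF' x
  have hdV : deriv V = G := funext fun x => (hV' x).deriv
  have hdG : deriv G = fun x => V x - U x := funext fun x => (hG' x).deriv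
  have hDiffV : Differentiable ℝ V := fun x => (hV' x).differentiableAt
  have hDiffG : Differentiable ℝ G := fun x => (hG' x).differentiableAt
  constructor
  · show ContDiff ℝ (1 + 1 : WithTop ℕ∞) V
    refine (contDiff_succ_iff_deriv (n := 1)).2 ⟨hDiffV, by simp, ?_⟩
    rw [hdV]
    refine contDiff_one_iff_deriv.2 ⟨hDiffG, ?_⟩
    rw [hdG]
    exact hDiffV.continuous.sub hU
  · intro x
    rw [hdV, hdG]
    ring
end

section
/- For 0 < a < 1/2, the pinning threshold d_pin(a) = (1 - a + a² - √(1-2a))/3 and the extinction threshold d_ext(a) = (1-a)²/4 satisfy: both are positive, both are strictly less than 1/4, and the equation d_pin(a) = d_ext(a) has a unique solution a_c in (0, 1/2). -/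
open Set

theorem dpin_dext_properties (dpin dext : ℝ → ℝ)
    (hdpin : ∀ a, dpin a = (1 - a + a^2 - Real.sqrt (1 - 2*a)) / 3)
    (hdext : ∀ a, dext a = (1 - a)^2 / 4) :
    (∀ a ∈ Ioo (0:ℝ) (1/2),
      0 < dpin a ∧ 0 < dext a ∧ dpin a < 1/4 ∧ dext a < 1/4) ∧
    (∃! a : ℝ, a ∈ Ioo (0:ℝ) (1/2) ∧ dpin a = dext a) := by
  -- key equivalence: on (0,1/2), dpin a = dext a ↔ (1+a)^4 = 16*(1-2a)
  have key : ∀ a ∈ Ioo (0:ℝ) (1/2), (dpin a = dext a ↔ (1+a)^4 = 16*(1-2*a)) := by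
    rintro a ⟨ha0, ha2⟩
    have hnn : (0:ℝ) ≤ 1 - 2*a := by linarith
    have hs2 : Real.sqrt (1 - 2*a) ^ 2 = 1 - 2*a := Real.sq_sqrt hnn
    rw [hdpin, hdext]
    constructor
    · intro heq
      have hs : 4 * Real.sqrt (1 - 2*a) = (1+a)^2 := by linear_combination (-12 : ℝ) * heq
      linear_combination (-((1+a)^2 + 4*Real.sqrt (1 - 2*a))) * hs + 16 * hs2
    · intro hpoly
      have h1 : 1 - 2*a = ((1+a)^2/4)^2 := by linear_combination (-1/16 : ℝ) * hpoly
      rw [h1, Real.sqrt_sq (by positivity)]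
      ring
  constructor
  · rintro a ⟨ha0, ha2⟩
    have hnn : (0:ℝ) ≤ 1 - 2*a := by linarith
    refine ⟨?_, by rw [hdext]; nlinarith, ?_, by rw [hdext]; nlinarith⟩
    · rw [hdpin]
      have h : Real.sqrt (1 - 2*a) < 1 - a + a^2 := by
        rw [Real.sqrt_lt' (by nlinarith)]
        nlinarith [sq_nonneg (1-a), mul_pos ha0 ha0]
      linarith
    · rw [hdpin]
      have h : 1/4 - a + a^2 < Real.sqrt (1 - 2*a) := by
        rw [Real.lt_sqrt (by nlinarith [sq_nonneg (a - 1/2)])]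
        nlinarith [mul_pos (mul_pos (show (0:ℝ) < 1/2 - a by linarith) (show (0:ℝ) < 1/2 - a by linarith)) (show (0:ℝ) < 1/2 - a by linarith), sq_nonneg (1/2 - a)]
      linarith
  · -- existence via IVT for f a = (1+a)^4 + 32a
    have hcont : ContinuousOn (fun a : ℝ => (1+a)^4 + 32*a) (Icc 0 (1/2)) := by
      fun_prop
    have hsub := intermediate_value_Ioo (by norm_num : (0:ℝ) ≤ 1/2) hcont
    have hmem : (16:ℝ) ∈ Ioo ((fun a : ℝ => (1+a)^4 + 32*a) 0) ((fun a : ℝ => (1+a)^4 + 32*a) (1/2)) := by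
      norm_num
    obtain ⟨a, haI, hfa⟩ := hsub hmem
    simp only at hfa
    refine ⟨a, ⟨haI, (key a haI).2 (by linarith)⟩, ?_⟩
    rintro b ⟨hbI, hbeq⟩
    have hb4 : (1+b)^4 = 16*(1-2*b) := (key b hbI).1 hbeq
    have ha4 : (1+a)^4 = 16*(1-2*a) := by linarith
    obtain ⟨ha0, _⟩ := haI
    obtain ⟨hb0, _⟩ := hbI
    rcases lt_trichotomy b a with h | h | h
    · exfalso
      have := pow_lt_pow_left₀ (show 1+b < 1+a by linarith) (by linarith) (by norm_num : 4 ≠ 0)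
      linarith
    · exact h
    · exfalso
      have := pow_lt_pow_left₀ (show 1+a < 1+b by linarith) (by linarith) (by norm_num : 4 ≠ 0)
      linarith
end

section
/- Let d > 0, κ > 0 with d > κ, and suppose v : [0,∞) × ℝ → ℝ is nonnegative with v(t,x) = e^{(κ-d)t} 𝟙_{[-ℓ,ℓ]}(x) + ∫₀^t e^{(κ-d)(t-s)} (K*v)(s,x) ds, where K ≥ 0 is bounded with ∫K = 1 and ‖v(t)‖_{L¹} = 2ℓ e^{κt}. Then v(t,x) ≤ e^{(κ-d)t} + (2ℓ‖K‖_∞/d) e^{κt} for all t > 0 and x ∈ ℝ. -/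
open Set MeasureTheory intervalIntegral

theorem duhamel_linear_bound (d κ ℓ CK : ℝ) (K : ℝ → ℝ) (v : ℝ → ℝ → ℝ)
    (hd : κ < d) (hκ : 0 < κ) (hℓ : 0 < ℓ)
    (hK0 : ∀ x, 0 ≤ K x) (hKb : ∀ x, K x ≤ CK)
    (hKint : Integrable K) (hKmass : ∫ x, K x = 1)
    (hv0 : ∀ t x, 0 ≤ v t x)
    (hvint : ∀ t, Integrable (v t))
    (hduhamel : ∀ t x, 0 ≤ t → v t x =
      Real.exp ((κ - d) * t) * indicator (Icc (-ℓ) ℓ) (fun _ => (1:ℝ)) x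
        + ∫ s in (0:ℝ)..t, Real.exp ((κ - d) * (t - s)) * ∫ y, K (x - y) * v s y)
    (hmass : ∀ t, 0 ≤ t → ∫ x, v t x = 2 * ℓ * Real.exp (κ * t)) :
    ∀ t x, 0 < t → v t x ≤ Real.exp ((κ - d) * t) + (2 * ℓ * CK / d) * Real.exp (κ * t) := by
  intro t x ht
  have ht' : (0:ℝ) ≤ t := ht.le
  have hd0 : 0 < d := hκ.trans hd
  have hCK : 0 ≤ CK := le_trans (hK0 0) (hKb 0)
  rw [hduhamel t x ht']
  -- first term
  have h1 : Real.exp ((κ - d) * t) * indicator (Icc (-ℓ) ℓ) (fun _ => (1:ℝ)) x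
      ≤ Real.exp ((κ - d) * t) := by
    have : indicator (Icc (-ℓ) ℓ) (fun _ => (1:ℝ)) x ≤ 1 := by
      apply indicator_le_self' <;> simp [indicator_apply]
    calc Real.exp ((κ - d) * t) * indicator (Icc (-ℓ) ℓ) (fun _ => (1:ℝ)) x
        ≤ Real.exp ((κ - d) * t) * 1 := by
          apply mul_le_mul_of_nonneg_left _ (Real.exp_nonneg _)
          by_cases hx : x ∈ Icc (-ℓ) ℓ <;> simp [indicator_apply, hx]
      _ = Real.exp ((κ - d) * t) := mul_one _
  -- bound on convolution
  have hconv : ∀ s : ℝ, 0 ≤ s →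
      (∫ y, K (x - y) * v s y) ≤ CK * (2 * ℓ * Real.exp (κ * s)) := by
    intro s hs
    calc (∫ y, K (x - y) * v s y) ≤ ∫ y, CK * v s y := by
          refine integral_mono_of_nonneg (ae_of_all _ fun y => mul_nonneg (hK0 _) (hv0 _ _))
            ((hvint s).const_mul CK) (ae_of_all _ fun y =>
              mul_le_mul_of_nonneg_right (hKb _) (hv0 _ _))
      _ = CK * ∫ y, v s y := MeasureTheory.integral_const_mul _ _
      _ = CK * (2 * ℓ * Real.exp (κ * s)) := by rw [hmass s hs]
  have hconv0 : ∀ s : ℝ, 0 ≤ (∫ y, K (x - y) * v s y) := fun s =>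
    integral_nonneg fun y => mul_nonneg (hK0 _) (hv0 _ _)
  -- majorant
  set g : ℝ → ℝ := fun s => Real.exp ((κ - d) * (t - s)) * (CK * (2 * ℓ * Real.exp (κ * s)))
    with hg_def
  have hgcont : Continuous g := by
    apply Continuous.mul
    · exact (Real.continuous_exp.comp (continuous_const.mul (continuous_const.sub continuous_id)))
    · exact continuous_const.mul (continuous_const.mul (Real.continuous_exp.comp
        (continuous_const.mul continuous_id)))
  have hgint : IntegrableOn g (Ioc 0 t) volume := hgcont.integrableOn_Ioc
  have h2 : (∫ s in (0:ℝ)..t, Real.exp ((κ - d) * (t - s)) * ∫ y, K (x - y) * v s y)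
      ≤ ∫ s in (0:ℝ)..t, g s := by
    rw [intervalIntegral.integral_of_le ht', intervalIntegral.integral_of_le ht']
    refine integral_mono_of_nonneg ?_ hgint ?_
    · filter_upwards with s
      exact mul_nonneg (Real.exp_nonneg _) (hconv0 s)
    · filter_upwards [ae_restrict_mem measurableSet_Ioc] with s hs
      exact mul_le_mul_of_nonneg_left (hconv s hs.1.le) (Real.exp_nonneg _)
  -- compute integral of majorant
  have hgsimp : ∀ s : ℝ, g s = (CK * (2 * ℓ) * Real.exp ((κ - d) * t)) * Real.exp (d * s) := by
    intro s
    have he : Real.exp ((κ - d) * (t - s)) * Real.exp (κ * s)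
        = Real.exp ((κ - d) * t) * Real.exp (d * s) := by
      rw [← Real.exp_add, ← Real.exp_add]; congr 1; ring
    simp only [hg_def]
    linear_combination CK * (2 * ℓ) * he
  have hexpint : (∫ s in (0:ℝ)..t, Real.exp (d * s)) = (Real.exp (d * t) - 1) / d := by
    have h := intervalIntegral.integral_comp_mul_left (fun u => Real.exp u) (a := 0) (b := t)
      (c := d) hd0.ne'
    rw [h, integral_exp]
    simp [smul_eq_mul, mul_zero, Real.exp_zero]
    ring
  have h3 : (∫ s in (0:ℝ)..t, g s) ≤ (2 * ℓ * CK / d) * Real.exp (κ * t) := by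
    have : (∫ s in (0:ℝ)..t, g s)
        = (CK * (2 * ℓ) * Real.exp ((κ - d) * t)) * ((Real.exp (d * t) - 1) / d) := by
      simp_rw [hgsimp]
      rw [intervalIntegral.integral_const_mul, hexpint]
    rw [this]
    have hkey : Real.exp ((κ - d) * t) * (Real.exp (d * t) - 1)
        ≤ Real.exp (κ * t) := by
      have : Real.exp ((κ - d) * t) * Real.exp (d * t) = Real.exp (κ * t) := by
        rw [← Real.exp_add]; ring_nf
      nlinarith [Real.exp_pos ((κ - d) * t), Real.exp_pos (d * t)]
    calc CK * (2 * ℓ) * Real.exp ((κ - d) * t) * ((Real.exp (d * t) - 1) / d)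
        = (CK * (2 * ℓ) / d) * (Real.exp ((κ - d) * t) * (Real.exp (d * t) - 1)) := by
          ring
      _ ≤ (CK * (2 * ℓ) / d) * Real.exp (κ * t) := by
          apply mul_le_mul_of_nonneg_left hkey
          positivity
      _ = (2 * ℓ * CK / d) * Real.exp (κ * t) := by ring
  linarith [h2.trans h3]
end
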